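/- Fix a mode n and a row index i_n ∈ {1,…,I_n}, and keep G, all factor matrices other than A^(n), and all rows of A^(n) other than row i_n fixed. Then there exists a constant C ∈ ℝ, not depending on the value of the i_n-th row, such that for every a ∈ ℝ^{J_n}, the Tucker loss with the i_n-th row of A^(n) set to a equals ∑_{i∈Ω^{(n)}_{i_n}} (X_i − ⟨a, δ^{(n)}_i⟩)² + λ ⟨a, a⟩ + C, where ⟨·,·⟩ denotes the Euclidean inner product on ℝ^{J_n}. (That is, the loss restricted to the i_n-th row has the ridge form built from the vectors δ^{(n)}_i computed with the fixed row set to a.) -/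

import Mathlib

open Finset Matrix

/-- The Tucker loss (Equation (7)):
`L(G, A⁽¹⁾,…,A⁽ᴺ⁾) = ∑_{i∈Ω} (X_i − ∑_j G_j ∏_n A⁽ⁿ⁾_{iₙ jₙ})² + λ ∑_n ‖A⁽ⁿ⁾‖_F²`. -/
noncomputable def tuckerLoss {N : ℕ} (I J : Fin N → ℕ)
    (Ω : Finset ((k : Fin N) → Fin (I k)))
    (X : ((k : Fin N) → Fin (I k)) → ℝ)
    (G : ((k : Fin N) → Fin (J k)) → ℝ)
    (A : (n : Fin N) → Matrix (Fin (I n)) (Fin (J n)) ℝ)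
    (lam : ℝ) : ℝ :=
  (∑ i ∈ Ω,
      (X i - ∑ j : (k : Fin N) → Fin (J k), G j * ∏ n, A n (i n) (j n)) ^ 2)
    + lam * ∑ n, ∑ p, ∑ q, A n p q ^ 2

/-- The vector `δ⁽ⁿ⁾_i ∈ ℝ^{Jₙ}` (Equation (10)):
`δ⁽ⁿ⁾_i(j) = ∑_{j' : j'ₙ = j} G_{j'} ∏_{k≠n} A⁽ᵏ⁾_{iₖ j'ₖ}`. -/
noncomputable def deltaVec {N : ℕ} (I J : Fin N → ℕ)
    (G : ((k : Fin N) → Fin (J k)) → ℝ)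
    (A : (n : Fin N) → Matrix (Fin (I n)) (Fin (J n)) ℝ)
    (n : Fin N) (i : (k : Fin N) → Fin (I k)) : Fin (J n) → ℝ :=
  fun j =>
    ∑ j' ∈ Finset.univ.filter (fun j' : (k : Fin N) → Fin (J k) => j' n = j),
      G j' * ∏ k ∈ Finset.univ.erase n, A k (i k) (j' k)

/-- The matrix `B⁽ⁿ⁾_{iₙ} ∈ ℝ^{Jₙ×Jₙ}` (Equation (8)), whose `(j₁,j₂)` entry is
`∑_{i ∈ Ω⁽ⁿ⁾_{iₙ}} δ⁽ⁿ⁾_i(j₁) δ⁽ⁿ⁾_i(j₂)`. -/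
noncomputable def Bmat {N : ℕ} (I J : Fin N → ℕ)
    (Ω : Finset ((k : Fin N) → Fin (I k)))
    (G : ((k : Fin N) → Fin (J k)) → ℝ)
    (A : (n : Fin N) → Matrix (Fin (I n)) (Fin (J n)) ℝ)
    (n : Fin N) (r : Fin (I n)) : Matrix (Fin (J n)) (Fin (J n)) ℝ :=
  fun j1 j2 =>
    ∑ i ∈ Ω.filter (fun i => i n = r),
      deltaVec I J G A n i j1 * deltaVec I J G A n i j2

/-- The vector `c⁽ⁿ⁾_{iₙ} ∈ ℝ^{Jₙ}` (Equation (9)), whose `j`th entry is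
`∑_{i ∈ Ω⁽ⁿ⁾_{iₙ}} X_i δ⁽ⁿ⁾_i(j)`. -/
noncomputable def cvec {N : ℕ} (I J : Fin N → ℕ)
    (Ω : Finset ((k : Fin N) → Fin (I k)))
    (X : ((k : Fin N) → Fin (I k)) → ℝ)
    (G : ((k : Fin N) → Fin (J k)) → ℝ)
    (A : (n : Fin N) → Matrix (Fin (I n)) (Fin (J n)) ℝ)
    (n : Fin N) (r : Fin (I n)) : Fin (J n) → ℝ :=
  fun j => ∑ i ∈ Ω.filter (fun i => i n = r), X i * deltaVec I J G A n i j

/-!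
The model entry at `i` is multilinear in the factor rows `A⁽ᵐ⁾_{iₘ}`; expanding it along mode `n`
gives `⟨A⁽ⁿ⁾_{iₙ}, δ⁽ⁿ⁾_i⟩`, where `δ⁽ⁿ⁾_i` does not involve `A⁽ⁿ⁾` at all. Replacing row `r` of
`A⁽ⁿ⁾` by `a` therefore turns the residuals on the fibre `iₙ = r` into `Xᵢ - ⟨a, δ⁽ⁿ⁾_i⟩` and leaves
all other residuals unchanged, while the Frobenius penalty changes only by `⟨a, a⟩ - ⟨A⁽ⁿ⁾_r, A⁽ⁿ⁾_r⟩`.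
-/

theorem Finset.sum_update_eq_sum_sub_add {ι M : Type*} [Fintype ι] [DecidableEq ι]
    [AddCommGroup M] (f : ι → M) (i : ι) (b : M) :
    ∑ x, Function.update f i b x = ∑ x, f x - f i + b := by
  rw [sum_update_of_mem (mem_univ i), sdiff_singleton_eq_erase, sum_erase_eq_sub (mem_univ i)]
  abel

theorem sum_sq_updateRow {m n : Type*} [Fintype m] [DecidableEq m] [Fintype n]
    (M : Matrix m n ℝ) (r : m) (a : n → ℝ) :
    ∑ p, ∑ q, M.updateRow r a p q ^ 2 = ∑ p, ∑ q, M p q ^ 2 - M r ⬝ᵥ M r + a ⬝ᵥ a := by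
  calc ∑ p, ∑ q, M.updateRow r a p q ^ 2
      = ∑ p, Function.update (fun p => ∑ q, M p q ^ 2) r (∑ q, a q ^ 2) p :=
        sum_congr rfl fun p _ => Function.apply_update (fun _ (v : n → ℝ) => ∑ q, v q ^ 2) M r a p
    _ = ∑ p, ∑ q, M p q ^ 2 - M r ⬝ᵥ M r + a ⬝ᵥ a := by
        simp only [sum_update_eq_sum_sub_add, dotProduct, sq]

theorem sum_sq_update_updateRow {ι : Type*} [Fintype ι] [DecidableEq ι] {m n : ι → Type*}
    [∀ k, Fintype (m k)] [∀ k, DecidableEq (m k)] [∀ k, Fintype (n k)]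
    (A : (k : ι) → Matrix (m k) (n k) ℝ) (i : ι) (r : m i) (a : n i → ℝ) :
    ∑ k, ∑ p, ∑ q, Function.update A i ((A i).updateRow r a) k p q ^ 2
      = ∑ k, ∑ p, ∑ q, A k p q ^ 2 - A i r ⬝ᵥ A i r + a ⬝ᵥ a := by
  calc ∑ k, ∑ p, ∑ q, Function.update A i ((A i).updateRow r a) k p q ^ 2
      = ∑ k, Function.update (fun k => ∑ p, ∑ q, A k p q ^ 2) i
          (∑ p, ∑ q, (A i).updateRow r a p q ^ 2) k :=
        sum_congr rfl fun k _ =>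
          Function.apply_update (fun k (B : Matrix (m k) (n k) ℝ) => ∑ p, ∑ q, B p q ^ 2) A i _ k
    _ = ∑ k, ∑ p, ∑ q, A k p q ^ 2 - A i r ⬝ᵥ A i r + a ⬝ᵥ a := by
        rw [sum_update_eq_sum_sub_add, sum_sq_updateRow]
        abel

section Tucker

variable {N : ℕ} {I J : Fin N → ℕ}

/-- The entry `(G ×₁ A⁽¹⁾ ⋯ ×_N A⁽ᴺ⁾)ᵢ` of the Tucker model. -/
noncomputable def tuckerEntry (G : ((k : Fin N) → Fin (J k)) → ℝ)
    (A : (n : Fin N) → Matrix (Fin (I n)) (Fin (J n)) ℝ) (i : (k : Fin N) → Fin (I k)) : ℝ :=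
  ∑ j : (k : Fin N) → Fin (J k), G j * ∏ n, A n (i n) (j n)

theorem tuckerLoss_eq (Ω : Finset ((k : Fin N) → Fin (I k))) (X : ((k : Fin N) → Fin (I k)) → ℝ)
    (G : ((k : Fin N) → Fin (J k)) → ℝ) (A : (n : Fin N) → Matrix (Fin (I n)) (Fin (J n)) ℝ)
    (lam : ℝ) :
    tuckerLoss I J Ω X G A lam
      = ∑ i ∈ Ω, (X i - tuckerEntry G A i) ^ 2 + lam * ∑ n, ∑ p, ∑ q, A n p q ^ 2 :=
  rfl

variable (G : ((k : Fin N) → Fin (J k)) → ℝ) (A : (n : Fin N) → Matrix (Fin (I n)) (Fin (J n)) ℝ)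

theorem tuckerEntry_eq_dotProduct_deltaVec (n : Fin N) (i : (k : Fin N) → Fin (I k)) :
    tuckerEntry G A i = A n (i n) ⬝ᵥ deltaVec I J G A n i := by
  have split_mode : ∀ j : (k : Fin N) → Fin (J k), G j * ∏ m, A m (i m) (j m)
      = A n (i n) (j n) * (G j * ∏ m ∈ univ.erase n, A m (i m) (j m)) := fun j => by
    rw [← mul_prod_erase _ _ (mem_univ n)]
    ring
  simp only [tuckerEntry, split_mode, dotProduct, deltaVec, mul_sum]
  rw [← sum_fiberwise univ (fun j : (k : Fin N) → Fin (J k) => j n)]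
  refine sum_congr rfl fun q _ => sum_congr rfl fun j hj => ?_
  rw [(mem_filter.mp hj).2]

theorem deltaVec_update_self (n : Fin N) (M : Matrix (Fin (I n)) (Fin (J n)) ℝ) :
    deltaVec I J G (Function.update A n M) n = deltaVec I J G A n := by
  funext i q
  refine sum_congr rfl fun j _ => congrArg (G j * ·) (prod_congr rfl fun m hm => ?_)
  rw [Function.update_of_ne (ne_of_mem_erase hm)]

theorem tuckerEntry_update (n : Fin N) (M : Matrix (Fin (I n)) (Fin (J n)) ℝ)
    (i : (k : Fin N) → Fin (I k)) :
    tuckerEntry G (Function.update A n M) i = M (i n) ⬝ᵥ deltaVec I J G A n i := by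
  rw [tuckerEntry_eq_dotProduct_deltaVec _ _ n, deltaVec_update_self, Function.update_self]

theorem sum_sq_residual_update_updateRow (Ω : Finset ((k : Fin N) → Fin (I k)))
    (X : ((k : Fin N) → Fin (I k)) → ℝ) (n : Fin N) (r : Fin (I n)) (a : Fin (J n) → ℝ) :
    ∑ i ∈ Ω, (X i - tuckerEntry G (Function.update A n ((A n).updateRow r a)) i) ^ 2
      = ∑ i ∈ Ω.filter (fun i => i n = r), (X i - a ⬝ᵥ deltaVec I J G A n i) ^ 2
        + ∑ i ∈ Ω.filter (fun i => ¬ i n = r), (X i - tuckerEntry G A i) ^ 2 := by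
  rw [← sum_filter_add_sum_filter_not Ω (fun i => i n = r)]
  congr 1 <;> refine sum_congr rfl fun i hi => ?_ <;> rw [tuckerEntry_update]
  · rw [(mem_filter.mp hi).2, updateRow_self]
  · rw [updateRow_ne (mem_filter.mp hi).2, tuckerEntry_eq_dotProduct_deltaVec _ _ n]

end Tucker

theorem tucker_row_restriction_is_ridge_general
    (N : ℕ) (I J : Fin N → ℕ)
    (Ω : Finset ((k : Fin N) → Fin (I k)))
    (X : ((k : Fin N) → Fin (I k)) → ℝ)
    (G : ((k : Fin N) → Fin (J k)) → ℝ)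
    (A : (n : Fin N) → Matrix (Fin (I n)) (Fin (J n)) ℝ)
    (lam : ℝ) (n : Fin N) (r : Fin (I n)) :
    ∃ C : ℝ, ∀ a : Fin (J n) → ℝ,
      tuckerLoss I J Ω X G (Function.update A n ((A n).updateRow r a)) lam
        = (∑ i ∈ Ω.filter (fun i => i n = r), (X i - a ⬝ᵥ deltaVec I J G A n i) ^ 2)
          + lam * (a ⬝ᵥ a) + C := by
  refine ⟨∑ i ∈ Ω.filter (fun i => ¬ i n = r), (X i - tuckerEntry G A i) ^ 2
      + lam * (∑ m, ∑ p, ∑ q, A m p q ^ 2 - A n r ⬝ᵥ A n r), fun a => ?_⟩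
  rw [tuckerLoss_eq, sum_sq_residual_update_updateRow, sum_sq_update_updateRow]
  ring

/-- Fixing mode `n` and row `iₙ = r`, the Tucker loss as a function of the
`r`-th row `a` of `A⁽ⁿ⁾` has the ridge form
`∑_{i∈Ω⁽ⁿ⁾_r} (X_i − ⟨a, δ⁽ⁿ⁾_i⟩)² + λ⟨a,a⟩ + C` for a constant `C` not depending on `a`. -/
theorem tucker_row_restriction_is_ridge
    (N : ℕ) (hN : 0 < N) (I J : Fin N → ℕ) (hI : ∀ k, 0 < I k) (hJ : ∀ k, 0 < J k)
    (Ω : Finset ((k : Fin N) → Fin (I k)))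
    (X : ((k : Fin N) → Fin (I k)) → ℝ)
    (G : ((k : Fin N) → Fin (J k)) → ℝ)
    (A : (n : Fin N) → Matrix (Fin (I n)) (Fin (J n)) ℝ)
    (lam : ℝ) (n : Fin N) (r : Fin (I n)) :
    ∃ C : ℝ, ∀ a : Fin (J n) → ℝ,
      tuckerLoss I J Ω X G (Function.update A n ((A n).updateRow r a)) lam
        = (∑ i ∈ Ω.filter (fun i => i n = r), (X i - a ⬝ᵥ deltaVec I J G A n i) ^ 2)
          + lam * (a ⬝ᵥ a) + C :=
  tucker_row_restriction_is_ridge_general N I J Ω X G A lam n r
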